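/- Let f ∈ R₁ be an irreducible polynomial with m > 0, f_m > 0, f₀ ≠ 0, which is nonhyperbolic (f has a root of absolute value 1) and not cyclotomic, and let α = α_{R₁/(f)} be the corresponding automorphism of X = X_{R₁/(f)}. If φ : ℓ^∞(ℤ,ℤ) → X is continuous (for the topology of coordinatewise convergence on ℓ^∞(ℤ,ℤ)) and satisfies φ ∘ σ̄ = α ∘ φ, then φ is constant, and its single value is a fixed point of α. -/

import Mathlib

/-!
If `w` is finitely supported, continuity at `0` and equivariance make `φ w - φ 0` a homoclinic
point of `α`: it lies in `X` and tends to `0` in both directions. Such a point vanishes as soon as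
`f` has a root `μ` on the unit circle. Lift it to a real sequence `y` tending to `0`; then
`G = f(τ) y` is an integer sequence tending to `0`, hence finitely supported, and a telescoping
argument gives `∑ⱼ Gⱼ μ⁻ʲ = 0`. Since `f` is irreducible, this makes `G = f(τ) W` for a finitely
supported integer sequence `W`. Now `y - W` is a real solution of `f(τ) = 0` decaying in both
directions; the shift and its inverse both contract the finite-dimensional space of such
solutions, which forces their determinants to have modulus `< 1` although their product is `1`.
So `y = W` is integer-valued and the homoclinic point is `0`. Finally, finitely supported sequences
are dense in `ℓ^∞(ℤ,ℤ)`.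
-/

open Filter Topology

/-- The group `X = X_{R₁/(f)} = ker f(τ) ⊆ 𝕋^ℤ`. -/
def XSet (f : Polynomial ℤ) : Set (ℤ → AddCircle (1 : ℝ)) :=
  {x | ∀ j : ℤ, ∑ k ∈ Finset.range (f.natDegree + 1), f.coeff k • x (j + (k : ℤ)) = 0}

/-- The set `ℓ^∞(ℤ,ℤ)` of bounded integer sequences (inside `ℤ^ℤ`, which carries the product
topology of coordinatewise convergence). -/
def BddZ : Set (ℤ → ℤ) := {v | ∃ C : ℤ, ∀ n : ℤ, |v n| ≤ C}

open Polynomial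

section SeqShift

variable (R M : Type*) [CommRing R] [AddCommGroup M] [Module R M]

/-- The shift `τ`; the paper's `f(τ)` is `aeval (seqShift R M) f`. -/
def seqShift : Module.End R (ℤ → M) := LinearMap.funLeft R M (· + 1)

variable {R M}

theorem LinearMap.funLeft_add_pow_apply (a : ℤ) (n : ℕ) (x : ℤ → M) (j : ℤ) :
    (LinearMap.funLeft R M (· + a) ^ n) x j = x (j + n * a) := by
  induction n generalizing x with
  | zero => simp
  | succ n ih =>
    rw [pow_succ, Module.End.mul_apply, ih]
    simp only [LinearMap.funLeft_apply]
    push_cast; ring_nf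

theorem seqShift_pow_apply (n : ℕ) (x : ℤ → M) (j : ℤ) : (seqShift R M ^ n) x j = x (j + n) := by
  simp [seqShift, LinearMap.funLeft_add_pow_apply]

theorem aeval_seqShift_apply (f : ℤ[X]) (x : ℤ → M) (j : ℤ) :
    aeval (seqShift R M) f x j = ∑ k ∈ Finset.range (f.natDegree + 1), f.coeff k • x (j + k) := by
  simp [aeval_eq_sum_range, seqShift_pow_apply]

theorem aeval_seqShift_comp_add (f : ℤ[X]) (x : ℤ → M) (a j : ℤ) :
    aeval (seqShift R M) f (fun n => x (n + a)) j = aeval (seqShift R M) f x (j + a) := by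
  simp only [aeval_seqShift_apply, add_right_comm]

theorem aeval_seqShift_comp {S N : Type*} [CommRing S] [AddCommGroup N] [Module S N]
    (f : ℤ[X]) (g : M →+ N) (x : ℤ → M) :
    aeval (seqShift S N) f (g ∘ x) = g ∘ aeval (seqShift R M) f x := by
  ext j
  simp [aeval_seqShift_apply]

theorem tendsto_aeval_seqShift [TopologicalSpace M] [IsTopologicalAddGroup M] (f : ℤ[X])
    {x : ℤ → M} (hx : Tendsto x cofinite (𝓝 0)) :
    Tendsto (aeval (seqShift R M) f x) cofinite (𝓝 0) := by
  have hshift (k : ℕ) : Tendsto (fun j : ℤ => x (j + k)) cofinite (𝓝 0) :=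
    hx.comp (add_left_injective _).tendsto_cofinite
  rw [show aeval (seqShift R M) f x = _ from _root_.funext (aeval_seqShift_apply f x)]
  simpa using tendsto_finsetSum _ fun k _ => (hshift k).const_smul (f.coeff k)

theorem eq_zero_of_aeval_seqShift_eq_zero [NoZeroSMulDivisors ℤ M] {f : ℤ[X]} (hf0 : f.coeff 0 ≠ 0)
    {x : ℤ → M} (hx : aeval (seqShift R M) f x = 0) (hinit : ∀ j : ℕ, j < f.natDegree → x j = 0) :
    x = 0 := by
  set d := f.natDegree
  have hfd : f.coeff d ≠ 0 := leadingCoeff_ne_zero.2 fun h => hf0 (by simp [h])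
  have hrec (j : ℤ) : ∑ k ∈ Finset.range (d + 1), f.coeff k • x (j + k) = 0 := by
    rw [← aeval_seqShift_apply (R := R), hx, Pi.zero_apply]
  have hwindow (n : ℕ) : ∀ j : ℤ, -n ≤ j → j < d + n → x j = 0 := by
    induction n with
    | zero =>
      intro j h₀ h₁
      lift j to ℕ using by omega
      exact hinit j (by omega)
    | succ n ih =>
      intro j h₀ h₁
      by_cases hj : -(n : ℤ) ≤ j ∧ j < d + n
      · exact ih j hj.1 hj.2
      obtain rfl | rfl : j = d + n ∨ j = -(n + 1) := by omega
      · have h := hrec n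
        rw [Finset.sum_range_succ, Finset.sum_eq_zero fun k hk => by
          rw [ih _ (by omega) (by simp at hk; omega), smul_zero], zero_add, smul_eq_zero] at h
        rw [add_comm]
        exact h.resolve_left hfd
      · have h := hrec (-(n + 1))
        rw [Finset.sum_range_succ', Finset.sum_eq_zero fun k hk => by
          rw [ih _ (by omega) (by simp at hk; omega), smul_zero], zero_add, smul_eq_zero] at h
        simpa using h.resolve_left hf0
  funext j
  exact hwindow (j.natAbs + 1) j (by omega) (by omega)

end SeqShift

theorem mem_XSet_iff {f : ℤ[X]} {x : ℤ → AddCircle (1 : ℝ)} :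
    x ∈ XSet f ↔ aeval (seqShift ℤ (AddCircle (1 : ℝ))) f x = 0 := by
  simp [XSet, funext_iff, aeval_seqShift_apply]

section LinearAlgebra

variable {𝕜 V : Type*} [NontriviallyNormedField 𝕜] [CompleteSpace 𝕜] [AddCommGroup V]
  [Module 𝕜 V] [TopologicalSpace V] [IsTopologicalAddGroup V] [ContinuousSMul 𝕜 V] [T2Space V]
  [FiniteDimensional 𝕜 V]

theorem Module.End.norm_det_lt_one_of_tendsto_pow [Nontrivial V] {T : Module.End 𝕜 V}
    (hT : ∀ v, Tendsto (fun n : ℕ => (T ^ n) v) atTop (𝓝 0)) : ‖LinearMap.det T‖ < 1 := by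
  let b := Module.finBasis 𝕜 V
  have : Nonempty (Fin (Module.finrank 𝕜 V)) := ⟨⟨0, Module.finrank_pos⟩⟩
  have hmat : Tendsto (fun n : ℕ => LinearMap.toMatrix b b (T ^ n)) atTop (𝓝 0) := by
    refine tendsto_pi_nhds.2 fun i => tendsto_pi_nhds.2 fun j => ?_
    have hcont : Continuous (b.coord i) := LinearMap.continuous_of_finiteDimensional _
    simpa [LinearMap.toMatrix_apply, Function.comp_def] using (hcont.tendsto 0).comp (hT (b j))
  have hdet := ((continuous_id.matrix_det).tendsto _).comp hmat
  rw [← tendsto_pow_atTop_nhds_zero_iff_norm_lt_one]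
  simpa [Function.comp_def, LinearMap.det_toMatrix, Matrix.det_zero] using hdet

theorem Module.End.subsingleton_of_tendsto_pow {T S : Module.End 𝕜 V} (hTS : T * S = 1)
    (hT : ∀ v, Tendsto (fun n : ℕ => (T ^ n) v) atTop (𝓝 0))
    (hS : ∀ v, Tendsto (fun n : ℕ => (S ^ n) v) atTop (𝓝 0)) : Subsingleton V := by
  by_contra hV
  rw [not_subsingleton_iff_nontrivial] at hV
  have hdet : ‖LinearMap.det T‖ * ‖LinearMap.det S‖ = 1 := by
    rw [← norm_mul, ← map_mul, hTS, map_one, norm_one]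
  exact hdet.not_lt (mul_lt_one_of_nonneg_of_lt_one_left (norm_nonneg _)
    (norm_det_lt_one_of_tendsto_pow hT) (norm_det_lt_one_of_tendsto_pow hS).le)

end LinearAlgebra

def decayingSolutions (f : ℤ[X]) : Submodule ℝ (ℤ → ℝ) where
  carrier := {y | aeval (seqShift ℝ ℝ) f y = 0 ∧ Tendsto y cofinite (𝓝 0)}
  add_mem' hy hz := ⟨by rw [map_add, hy.1, hz.1, add_zero], by
    rw [← add_zero (0 : ℝ)]; exact hy.2.add hz.2⟩
  zero_mem' := ⟨map_zero _, tendsto_const_nhds⟩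
  smul_mem' c _ hy := ⟨by rw [map_smul, hy.1, smul_zero], by
    rw [← smul_zero c]; exact hy.2.const_smul c⟩

namespace decayingSolutions

variable {f : ℤ[X]}

theorem funLeft_add_mem (a : ℤ) :
    ∀ y ∈ decayingSolutions f, LinearMap.funLeft ℝ ℝ (· + a) y ∈ decayingSolutions f :=
  fun y hy => ⟨funext fun j => (aeval_seqShift_comp_add f y a j).trans (congrFun hy.1 _),
    hy.2.comp (add_left_injective a).tendsto_cofinite⟩

theorem tendsto_pow_funLeft_add {a : ℤ} (ha : a ≠ 0) (y : decayingSolutions f) :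
    Tendsto (fun n : ℕ => ((LinearMap.funLeft ℝ ℝ (· + a)).restrict (funLeft_add_mem a) ^ n) y)
      atTop (𝓝 0) := by
  rw [tendsto_subtype_rng]
  refine tendsto_pi_nhds.2 fun j => ?_
  have hcoe (n : ℕ) :
      ((((LinearMap.funLeft ℝ ℝ (· + a)).restrict (funLeft_add_mem a)) ^ n) y : ℤ → ℝ) j =
        y.1 (j + n * a) := by
    rw [Module.End.pow_restrict, LinearMap.coe_restrict_apply,
      LinearMap.funLeft_add_pow_apply]
  have hinj : Function.Injective fun n : ℕ => j + n * a := fun m n h => by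
    simpa using mul_right_cancel₀ ha (add_left_cancel h)
  simp only [hcoe, ZeroMemClass.coe_zero, Pi.zero_apply, ← Nat.cofinite_eq_atTop]
  exact y.2.2.comp hinj.tendsto_cofinite

theorem finiteDimensional (hf0 : f.coeff 0 ≠ 0) : FiniteDimensional ℝ (decayingSolutions f) := by
  let ι : decayingSolutions f →ₗ[ℝ] (Fin f.natDegree → ℝ) :=
    (LinearMap.pi fun i : Fin f.natDegree => LinearMap.proj (i : ℤ)) ∘ₗ Submodule.subtype _
  refine Module.Finite.of_injective ι (LinearMap.ker_eq_bot.1 (LinearMap.ker_eq_bot'.2 ?_))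
  intro y hy
  exact Subtype.ext (eq_zero_of_aeval_seqShift_eq_zero hf0 y.2.1 fun j hj => congrFun hy ⟨j, hj⟩)

theorem eq_bot (hf0 : f.coeff 0 ≠ 0) : decayingSolutions f = ⊥ := by
  have := decayingSolutions.finiteDimensional hf0
  have := Module.End.subsingleton_of_tendsto_pow
    (T := (LinearMap.funLeft ℝ ℝ (· + 1)).restrict (funLeft_add_mem (f := f) 1))
    (S := (LinearMap.funLeft ℝ ℝ (· + -1)).restrict (funLeft_add_mem (f := f) (-1)))
    (by ext y j; simp) (tendsto_pow_funLeft_add one_ne_zero)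
    (tendsto_pow_funLeft_add (by norm_num))
  exact Submodule.eq_bot_of_subsingleton

end decayingSolutions

section Telescoping

variable {E : Type*} [AddCommGroup E]

theorem sum_Icc_comp_add_one_sub (b : ℤ → E) (N : ℕ) :
    ∑ j ∈ Finset.Icc (-(N : ℤ)) N, b (j + 1) - ∑ j ∈ Finset.Icc (-(N : ℤ)) N, b j =
      b (N + 1) - b (-N) := by
  have hshift : ∑ j ∈ Finset.Icc (-(N : ℤ)) N, b (j + 1) =
      ∑ j ∈ Finset.Icc (-(N : ℤ) + 1) (N + 1), b j := by
    rw [← Finset.map_add_right_Icc, Finset.sum_map]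
    rfl
  rw [hshift, ← Finset.insert_Icc_right_eq_Icc_add_one (by omega),
    ← Finset.insert_Icc_add_one_left_eq_Icc (a := -(N : ℤ)) (by omega),
    Finset.sum_insert (by simp), Finset.sum_insert (by simp)]
  abel

theorem tendsto_sum_Icc_comp_add_sub [TopologicalSpace E] [IsTopologicalAddGroup E] {b : ℤ → E}
    (hb : Tendsto b cofinite (𝓝 0)) (k : ℕ) :
    Tendsto (fun N : ℕ => ∑ j ∈ Finset.Icc (-(N : ℤ)) N, b (j + k) -
      ∑ j ∈ Finset.Icc (-(N : ℤ)) N, b j) atTop (𝓝 0) := by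
  induction k with
  | zero => simpa using tendsto_const_nhds
  | succ k ih =>
    have htop : Tendsto (fun N : ℕ => b (N + 1 + k)) atTop (𝓝 0) := by
      rw [← Nat.cofinite_eq_atTop]
      exact hb.comp (Function.Injective.tendsto_cofinite fun m n h => by simpa using h)
    have hbot : Tendsto (fun N : ℕ => b (-N + k)) atTop (𝓝 0) := by
      rw [← Nat.cofinite_eq_atTop]
      exact hb.comp (Function.Injective.tendsto_cofinite fun m n h => by simpa using h)
    have h := (htop.sub hbot).add ih
    rw [sub_zero, add_zero] at h
    refine h.congr fun N => ?_
    have := sum_Icc_comp_add_one_sub (fun j => b (j + k)) N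
    have hk (j : ℤ) : b (j + (k + 1 : ℕ)) = b (j + 1 + k) := by push_cast; ring_nf
    simp only [hk, ← this]
    abel

end Telescoping

theorem tendsto_sum_Icc_aeval_seqShift_mul_zpow {𝕜 : Type*} [NormedField 𝕜] {f : ℤ[X]} {μ : 𝕜}
    (hroot : aeval μ f = 0) (hμ : ‖μ‖ = 1) {x : ℤ → 𝕜} (hx : Tendsto x cofinite (𝓝 0)) :
    Tendsto (fun N : ℕ => ∑ j ∈ Finset.Icc (-(N : ℤ)) N, aeval (seqShift 𝕜 𝕜) f x j * μ ^ (-j))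
      atTop (𝓝 0) := by
  have hμ0 : μ ≠ 0 := norm_ne_zero_iff.1 (by rw [hμ]; exact one_ne_zero)
  set a : ℤ → 𝕜 := fun i => x i * μ ^ (-i)
  have ha : Tendsto a cofinite (𝓝 0) := by
    rw [tendsto_zero_iff_norm_tendsto_zero]
    simpa [a, norm_zpow, hμ] using hx.norm
  have hf : ∑ k ∈ Finset.range (f.natDegree + 1), (f.coeff k : 𝕜) * μ ^ k = 0 := by
    simpa [aeval_eq_sum_range, zsmul_eq_mul] using hroot
  -- `x (j + k) μ⁻ʲ = μᵏ a (j + k)`, and `∑ₖ fₖ μᵏ = 0` lets us subtract the unshifted window sum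
  have hexpand (N : ℕ) : ∑ j ∈ Finset.Icc (-(N : ℤ)) N, aeval (seqShift 𝕜 𝕜) f x j * μ ^ (-j) =
      ∑ k ∈ Finset.range (f.natDegree + 1), (f.coeff k * μ ^ k) *
        (∑ j ∈ Finset.Icc (-(N : ℤ)) N, a (j + k) - ∑ j ∈ Finset.Icc (-(N : ℤ)) N, a j) := by
    simp_rw [mul_sub, Finset.sum_sub_distrib, ← Finset.sum_mul, hf, zero_mul, sub_zero,
      aeval_seqShift_apply, Finset.sum_mul, Finset.mul_sum]
    rw [Finset.sum_comm]
    refine Finset.sum_congr rfl fun k _ => Finset.sum_congr rfl fun j _ => ?_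
    simp only [a, zsmul_eq_mul, zpow_add₀ hμ0, zpow_neg, zpow_natCast]
    field_simp
  simp_rw [hexpand]
  simpa using tendsto_finsetSum _ fun k _ =>
    (tendsto_sum_Icc_comp_add_sub ha k).const_mul ((f.coeff k : 𝕜) * μ ^ k)

theorem sum_Icc_aeval_seqShift_mul_zpow_eq_zero {𝕜 : Type*} [NormedField 𝕜] {f : ℤ[X]} {μ : 𝕜}
    (hroot : aeval μ f = 0) (hμ : ‖μ‖ = 1) {x : ℤ → 𝕜} (hx : Tendsto x cofinite (𝓝 0)) {N : ℕ}
    (hN : ∀ j ∉ Finset.Icc (-(N : ℤ)) N, aeval (seqShift 𝕜 𝕜) f x j = 0) :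
    ∑ j ∈ Finset.Icc (-(N : ℤ)) N, aeval (seqShift 𝕜 𝕜) f x j * μ ^ (-j) = 0 := by
  refine tendsto_nhds_unique (tendsto_const_nhds.congr' ?_)
    (tendsto_sum_Icc_aeval_seqShift_mul_zpow hroot hμ hx)
  filter_upwards [eventually_ge_atTop N] with n hn
  refine Finset.sum_subset (Finset.Icc_subset_Icc (by omega) (by omega)) fun j _ hj => ?_
  rw [hN j hj, zero_mul]

theorem Polynomial.dvd_of_irreducible_of_aeval_eq_zero {K : Type*} [Field K] [CharZero K]
    {f P : ℤ[X]} (hf : Irreducible f) {μ : K} (hfμ : aeval μ f = 0) (hPμ : aeval μ P = 0) :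
    f ∣ P := by
  have hdeg : f.natDegree ≠ 0 := fun h => by
    rw [eq_C_of_natDegree_eq_zero h] at hf hfμ
    simp_all
  have hprim := hf.isPrimitive hdeg
  have hfℚ : Irreducible (f.map (algebraMap ℤ ℚ)) :=
    (hprim.irreducible_iff_irreducible_map_fraction_map).1 hf
  rw [hprim.dvd_iff_fraction_map_dvd_fraction_map ℚ]
  rw [← aeval_map_algebraMap ℚ] at hfμ hPμ
  exact (dvd_mul_right _ _).trans (minpoly.eq_of_irreducible hfℚ hfμ ▸ minpoly.dvd ℚ μ hPμ)

theorem exists_aeval_seqShift_eq {K : Type*} [Field K] [CharZero K] {f : ℤ[X]}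
    (hf : Irreducible f) {μ : K} (hμ : μ ≠ 0) (hfμ : aeval μ f = 0) {G : ℤ → ℤ} {N : ℕ}
    (hG : ∀ j ∉ Finset.Icc (-(N : ℤ)) N, G j = 0)
    (hsum : ∑ j ∈ Finset.Icc (-(N : ℤ)) N, (G j : K) * μ ^ (-j) = 0) :
    ∃ W : ℤ → ℤ, Tendsto W cofinite (𝓝 0) ∧ aeval (seqShift ℤ ℤ) f W = G := by
  -- `G = P(τ) δ_N` for the unit impulse `δ_N` at `N`, and `P(μ) = μᴺ ∑ⱼ Gⱼ μ⁻ʲ = 0` gives `f ∣ P`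
  let P : ℤ[X] := ∑ j ∈ Finset.Icc (-(N : ℤ)) N, C (G j) * X ^ (N - j).toNat
  let δ : ℤ → ℤ := Pi.single (N : ℤ) 1
  have hPμ : aeval μ P = 0 := by
    have h (j : ℤ) (hj : j ∈ Finset.Icc (-(N : ℤ)) N) :
        aeval μ (C (G j) * X ^ (N - j).toNat) = μ ^ (N : ℤ) * ((G j : K) * μ ^ (-j)) := by
      rw [Finset.mem_Icc] at hj
      rw [map_mul, aeval_C, map_pow, aeval_X, ← zpow_natCast, Int.toNat_of_nonneg (by omega),
        sub_eq_add_neg, zpow_add₀ hμ]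
      simp only [algebraMap_int_eq, eq_intCast]
      ring
    rw [map_sum, Finset.sum_congr rfl h, ← Finset.mul_sum, hsum, mul_zero]
  have hPδ : aeval (seqShift ℤ ℤ) P δ = G := by
    ext i
    simp only [P, δ, eq_intCast, map_sum, map_mul, map_intCast, map_pow, aeval_X,
      LinearMap.coe_sum, Finset.sum_apply, Module.End.mul_apply, Module.End.intCast_apply,
      zsmul_eq_mul, Pi.mul_apply, Pi.intCast_apply, Int.cast_eq, seqShift_pow_apply,
      Int.ofNat_toNat, Pi.single_apply, mul_ite, mul_one, mul_zero]
    rw [Finset.sum_congr rfl fun j hj =>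
      if_congr (Q := i = j) (by rw [Finset.mem_Icc] at hj; omega) rfl rfl, Finset.sum_ite_eq]
    split_ifs with hi
    · rfl
    · exact (hG i hi).symm
  obtain ⟨Q, hQ⟩ := dvd_of_irreducible_of_aeval_eq_zero hf hfμ hPμ
  refine ⟨aeval (seqShift ℤ ℤ) Q δ, tendsto_aeval_seqShift Q ?_, ?_⟩
  · exact tendsto_nhds_of_eventually_eq ((eventually_cofinite_ne (N : ℤ)).mono fun i hi => by
      simp [δ, hi])
  · rw [← Module.End.mul_apply, ← map_mul, ← hQ, hPδ]

theorem AddCircle.exists_lift_tendsto_zero {p : ℝ} [hp : Fact (0 < p)] {ι : Type*}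
    {l : Filter ι} {x : ι → AddCircle p} (hx : Tendsto x l (𝓝 0)) :
    ∃ y : ι → ℝ, (∀ i, (y i : AddCircle p) = x i) ∧ Tendsto y l (𝓝 0) := by
  have hp := hp.out
  have h0 : (0 : ℝ) ∈ Set.Ico (-(p / 2)) (-(p / 2) + p) := by constructor <;> linarith
  have hne : (0 : AddCircle p) ≠ ((-(p / 2) : ℝ) : AddCircle p) := fun h => by
    have := (coe_eq_coe_iff_of_mem_Ico h0 (Set.left_mem_Ico.2 (by linarith))).1 (by simpa using h)
    linarith
  have he0 : (equivIco p (-(p / 2)) 0 : ℝ) = 0 := by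
    simpa using equivIco_coe_of_mem h0
  refine ⟨fun i => equivIco p (-(p / 2)) (x i), fun i => coe_equivIco, ?_⟩
  rw [← he0]
  exact (continuous_subtype_val.tendsto _).comp ((continuousAt_equivIco p _ hne).tendsto.comp hx)

theorem exists_forall_notMem_Icc_eq_zero {G : ℤ → ℤ} (hG : Tendsto G cofinite (𝓝 0)) :
    ∃ N : ℕ, ∀ j ∉ Finset.Icc (-(N : ℤ)) N, G j = 0 := by
  rw [nhds_discrete, tendsto_pure, eventually_cofinite] at hG
  obtain ⟨N, hN⟩ := (hG.image Int.natAbs).bddAbove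
  refine ⟨N, fun j hj => by_contra fun hGj => hj ?_⟩
  have := hN ⟨j, hGj, rfl⟩
  rw [Finset.mem_Icc]
  omega

theorem exists_aeval_seqShift_eq_intCast {f : ℤ[X]} {y : ℤ → ℝ}
    (hy : aeval (seqShift ℤ (AddCircle (1 : ℝ))) f ((↑) ∘ y) = 0) :
    ∃ G : ℤ → ℤ, aeval (seqShift ℝ ℝ) f y = (↑) ∘ G := by
  change aeval (seqShift ℤ (AddCircle (1 : ℝ))) f
    (QuotientAddGroup.mk' (AddSubgroup.zmultiples (1 : ℝ)) ∘ y) = 0 at hy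
  rw [aeval_seqShift_comp (R := ℝ) f] at hy
  choose G hG using fun j => (AddCircle.coe_eq_zero_iff 1).1 (congrFun hy j)
  exact ⟨G, funext fun j => by simpa using (hG j).symm⟩

theorem eq_zero_of_mem_XSet_of_tendsto {f : ℤ[X]} (hf : Irreducible f) (hf0 : f.coeff 0 ≠ 0)
    {μ : ℂ} (hfμ : aeval μ f = 0) (hμ : ‖μ‖ = 1) {x : ℤ → AddCircle (1 : ℝ)} (hxX : x ∈ XSet f)
    (hx : Tendsto x cofinite (𝓝 0)) : x = 0 := by
  obtain ⟨y, hyx, hy⟩ := AddCircle.exists_lift_tendsto_zero hx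
  obtain ⟨G, hG⟩ := exists_aeval_seqShift_eq_intCast (f := f) (y := y) <| by
    rwa [show ((↑) ∘ y : ℤ → AddCircle (1 : ℝ)) = x from funext hyx, ← mem_XSet_iff]
  obtain ⟨N, hN⟩ := exists_forall_notMem_Icc_eq_zero (G := G) <| by
    rw [Int.isClosedEmbedding_coe_real.tendsto_nhds_iff, ← hG, Int.cast_zero]
    exact tendsto_aeval_seqShift f hy
  have hsum : ∑ j ∈ Finset.Icc (-(N : ℤ)) N, (G j : ℂ) * μ ^ (-j) = 0 := by
    have hGℂ : aeval (seqShift ℂ ℂ) f (fun j => (y j : ℂ)) = fun j => ((G j : ℤ) : ℂ) := by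
      have := aeval_seqShift_comp (R := ℝ) (S := ℂ) f Complex.ofRealHom.toAddMonoidHom y
      rw [hG] at this
      exact this.trans (funext fun j => by simp)
    have := sum_Icc_aeval_seqShift_mul_zpow_eq_zero hfμ hμ (x := fun j => (y j : ℂ)) (N := N)
      (by rw [← Complex.ofReal_zero]; exact (Complex.continuous_ofReal.tendsto 0).comp hy)
      (fun j hj => by simp only [hGℂ, hN j hj, Int.cast_zero])
    rwa [hGℂ] at this
  obtain ⟨W, hW0, hW⟩ := exists_aeval_seqShift_eq hf (norm_ne_zero_iff.1 (by simp [hμ])) hfμ hN hsum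
  have hyW : y - (↑) ∘ W ∈ decayingSolutions f := by
    refine ⟨?_, ?_⟩
    · have := aeval_seqShift_comp (R := ℤ) (S := ℝ) f (Int.castAddHom ℝ) W
      rw [Int.coe_castAddHom, hW] at this
      rw [map_sub, hG, this, sub_self]
    · rw [Int.isClosedEmbedding_coe_real.tendsto_nhds_iff, Int.cast_zero] at hW0
      rw [← sub_zero (0 : ℝ)]
      exact hy.sub hW0
  rw [decayingSolutions.eq_bot hf0, Submodule.mem_bot, sub_eq_zero] at hyW
  funext j
  rw [← hyx j, hyW]
  exact (AddCircle.coe_eq_zero_iff 1).2 ⟨W j, by simp⟩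

theorem map_comp_add_of_map_comp_add_one {α β : Type*} {S : Set (ℤ → α)}
    (hS : ∀ v ∈ S, ∀ a : ℤ, (fun n => v (n + a)) ∈ S) {φ : (ℤ → α) → ℤ → β}
    (hφ : ∀ v ∈ S, φ (fun n => v (n + 1)) = fun j => φ v (j + 1)) (a : ℤ) :
    ∀ v ∈ S, φ (fun n => v (n + a)) = fun j => φ v (j + a) := by
  induction a using Int.induction_on with
  | zero => simp
  | succ a ih =>
    intro v hv
    have h := hφ _ (hS v hv a)
    simp only [ih v hv, add_right_comm _ (1 : ℤ)] at h
    simpa only [add_assoc] using h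
  | pred a ih =>
    intro v hv
    have h := hφ _ (hS v hv (-a - 1))
    have hcancel (n : ℤ) : n + 1 + (-a - 1) = n + -a := by ring
    simp only [hcancel, ih v hv] at h
    funext j
    have hj := congrFun h (j - 1)
    rw [sub_add_cancel] at hj
    rw [← hj]
    ring_nf

theorem tendsto_cofinite_of_map_comp_add {α β : Type*} [TopologicalSpace α] [TopologicalSpace β]
    {S : Set (ℤ → α)} {φ : (ℤ → α) → ℤ → β} {c : α} (hφ : ContinuousWithinAt φ S fun _ => c)
    {w : ℤ → α} (hwS : ∀ a : ℤ, (fun n => w (n + a)) ∈ S)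
    (hφw : ∀ a : ℤ, φ (fun n => w (n + a)) = fun j => φ w (j + a))
    (hw : Tendsto w cofinite (𝓝 c)) : Tendsto (φ w) cofinite (𝓝 (φ (fun _ => c) 0)) := by
  have hshift : Tendsto (fun a n => w (n + a)) cofinite (𝓝[S] fun _ => c) :=
    tendsto_nhdsWithin_iff.2 ⟨tendsto_pi_nhds.2 fun n =>
      hw.comp (add_right_injective n).tendsto_cofinite, Eventually.of_forall hwS⟩
  refine (((continuous_apply 0).tendsto _).comp (hφ.tendsto.comp hshift)).congr fun a => ?_
  simp [hφw a]

theorem comp_add_mem_BddZ {v : ℤ → ℤ} (hv : v ∈ BddZ) (a : ℤ) : (fun n => v (n + a)) ∈ BddZ :=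
  let ⟨C, hC⟩ := hv
  ⟨C, fun n => hC (n + a)⟩

theorem BddZ_subset_closure : BddZ ⊆ closure {w ∈ BddZ | Tendsto w cofinite (𝓝 0)} := by
  rintro v ⟨C, hC⟩
  let t (N : ℕ) : ℤ → ℤ := (Set.Icc (-(N : ℤ)) N).indicator v
  refine mem_closure_of_tendsto (f := t) (b := atTop) ?_ (Eventually.of_forall fun N => ⟨?_, ?_⟩)
  · refine tendsto_pi_nhds.2 fun i => tendsto_nhds_of_eventually_eq ?_
    filter_upwards [eventually_ge_atTop i.natAbs] with N hN
    exact Set.indicator_of_mem (by simp only [Set.mem_Icc]; omega) v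
  · refine ⟨C, fun n => ?_⟩
    by_cases hn : n ∈ Set.Icc (-(N : ℤ)) N
    · simpa [t, hn] using hC n
    · simpa [t, hn] using (abs_nonneg (v n)).trans (hC n)
  · refine tendsto_nhds_of_eventually_eq ?_
    filter_upwards [(Set.finite_Icc (-(N : ℤ)) N).eventually_cofinite_notMem] with n hn
    simp [t, hn]

theorem no_equivariant_map_from_linfty_general
    (f : Polynomial ℤ) (hconst : f.coeff 0 ≠ 0) (hirr : Irreducible f)
    (hnonhyp : ∃ z : ℂ, Polynomial.aeval z f = 0 ∧ ‖z‖ = 1)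
    (φ : (ℤ → ℤ) → (ℤ → AddCircle (1 : ℝ)))
    (hmem : ∀ v ∈ BddZ, φ v ∈ XSet f)
    (hcont : ContinuousOn φ BddZ)
    (hequiv : ∀ v ∈ BddZ, φ (fun n => v (n + 1)) = fun j => φ v (j + 1)) :
    ∃ xbar ∈ XSet f, (∀ j : ℤ, xbar (j + 1) = xbar j) ∧ ∀ v ∈ BddZ, φ v = xbar := by
  obtain ⟨μ, hfμ, hμ⟩ := hnonhyp
  have h0 : (0 : ℤ → ℤ) ∈ BddZ := ⟨0, by simp⟩
  have hshift := map_comp_add_of_map_comp_add_one (fun v hv => comp_add_mem_BddZ hv) hequiv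
  have hφ0 (j : ℤ) : φ 0 j = φ 0 0 := by
    have h := congrFun (hshift j 0 h0) 0
    rw [zero_add] at h
    exact h.symm
  refine ⟨φ 0, hmem 0 h0, fun j => (hφ0 _).trans (hφ0 j).symm, ?_⟩
  have hfin : Set.EqOn φ (fun _ => φ 0) {w ∈ BddZ | Tendsto w cofinite (𝓝 0)} := by
    rintro w ⟨hw, hw0⟩
    show φ w = φ 0
    have hlim := tendsto_cofinite_of_map_comp_add (hcont 0 h0) (comp_add_mem_BddZ hw)
      (fun a => hshift a w hw) hw0
    rw [← sub_eq_zero]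
    refine eq_zero_of_mem_XSet_of_tendsto hirr hconst hfμ hμ ?_ ?_
    · rw [mem_XSet_iff, map_sub, mem_XSet_iff.1 (hmem w hw), mem_XSet_iff.1 (hmem 0 h0), sub_zero]
    · rw [show φ w - φ 0 = fun j => φ w j - φ 0 0 from funext fun j => by rw [Pi.sub_apply, hφ0],
        ← sub_self (φ 0 0)]
      exact hlim.sub_const _
  exact fun v hv => hfin.of_subset_closure hcont continuousOn_const (Set.sep_subset _ _)
    BddZ_subset_closure hv

/-- In the nonhyperbolic noncyclotomic case, any map `φ : ℓ^∞(ℤ,ℤ) → X` which is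
continuous for the topology of coordinatewise convergence and intertwines the shift `σ̄` with
`α` (the shift `τ` restricted to `X`) is constant, with value a fixed point of `α`. -/
theorem no_equivariant_map_from_linfty
    (f : Polynomial ℤ) (m : ℕ) (hm : 0 < m) (hdeg : f.natDegree = m)
    (hlead : 0 < f.leadingCoeff) (hconst : f.coeff 0 ≠ 0) (hirr : Irreducible f)
    (hnonhyp : ∃ z : ℂ, Polynomial.aeval z f = 0 ∧ ‖z‖ = 1)
    (hnoncyc : ¬ ∃ z : ℂ, Polynomial.aeval z f = 0 ∧ ∃ n : ℕ, 0 < n ∧ z ^ n = 1)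
    (φ : (ℤ → ℤ) → (ℤ → AddCircle (1 : ℝ)))
    (hmem : ∀ v ∈ BddZ, φ v ∈ XSet f)
    (hcont : ContinuousOn φ BddZ)
    (hequiv : ∀ v ∈ BddZ, φ (fun n => v (n + 1)) = fun j => φ v (j + 1)) :
    ∃ xbar ∈ XSet f, (∀ j : ℤ, xbar (j + 1) = xbar j) ∧ ∀ v ∈ BddZ, φ v = xbar :=
  no_equivariant_map_from_linfty_general f hconst hirr hnonhyp φ hmem hcont hequiv
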